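/- For any choice rule C satisfying non-wastefulness, no justified envy, and compliance with VR protections, and any applicant set I, the set of individuals admitted by the meritorious Over-and-Above rule on I Gale dominates the set of individuals admitted by C on I. -/

import Mathlib

attribute [local instance] Classical.propDecidable

noncomputable section

variable {ι R : Type*} [Fintype ι] [DecidableEq ι] [Fintype R] [DecidableEq R]

/-- Eligibility sets: everyone is eligible for the open category (`none`),
and `elig c` is the set of members of VR-protected category `c`. -/
def eligOf (elig : R → Finset ι) : Option R → Finset ι
  | none => (Finset.univ : Finset ι)
  | some c => elig c

/-- Aggregate choice: all individuals chosen across all categories. -/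
def aggC (C : Finset ι → Option R → Finset ι) (I : Finset ι) : Finset ι :=
  Finset.univ.biUnion fun v => C I v

/-- `C` is a choice rule for capacities `q` and eligibility `elig`: each category chooses
eligible applicants up to capacity, and no individual is chosen by two categories. -/
def IsChoiceRule (q : Option R → ℕ) (elig : R → Finset ι)
    (C : Finset ι → Option R → Finset ι) : Prop :=
  ∀ I : Finset ι,
    (∀ v, C I v ⊆ I ∩ eligOf elig v) ∧
    (∀ v, (C I v).card ≤ q v) ∧
    (∀ v v', v ≠ v' → Disjoint (C I v) (C I v'))

/-- Non-wastefulness: no position remains idle while an eligible applicant is unchosen. -/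
def NonWasteful (q : Option R → ℕ) (elig : R → Finset ι)
    (C : Finset ι → Option R → Finset ι) : Prop :=
  ∀ (I : Finset ι) (v : Option R) (j : ι),
    j ∈ I → j ∉ aggC C I → (C I v).card < q v → j ∉ eligOf elig v

/-- No justified envy: a chosen individual outscores every eligible entirely-unchosen applicant. -/
def NoJustifiedEnvy (σ : ι → ℝ) (elig : R → Finset ι)
    (C : Finset ι → Option R → Finset ι) : Prop :=
  ∀ (I : Finset ι) (v : Option R) (i j : ι),
    i ∈ C I v → j ∈ I → j ∈ eligOf elig v → j ∉ aggC C I → σ j < σ i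

/-- Compliance with VR protections: a VR recipient implies the open category is full, with
every open-category recipient scoring strictly higher. -/
def CompliesVR (σ : ι → ℝ) (q : Option R → ℕ)
    (C : Finset ι → Option R → Finset ι) : Prop :=
  ∀ (I : Finset ι) (c : R) (i : ι), i ∈ C I (some c) →
    (C I none).card = q none ∧ ∀ j ∈ C I none, σ i < σ j

/-- The (at most) `k` highest merit-score members of `S`. -/
def topK (σ : ι → ℝ) (S : Finset ι) (k : ℕ) : Finset ι :=
  S.filter fun i => (S.filter fun j => σ i ≤ σ j).card ≤ k

/-- The Over-and-Above choice rule: open positions go to the top-merit applicants; then each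
VR category's quota is filled by the highest-merit remaining eligible members. -/
def OA (σ : ι → ℝ) (q : Option R → ℕ) (elig : R → Finset ι)
    (I : Finset ι) : Option R → Finset ι
  | none => topK σ I (q none)
  | some c => topK σ ((I \ topK σ I (q none)) ∩ elig c) (q (some c))

/-- `μ` is a matching of members of `S` to VR-protected positions: every matched individual
belongs to `S` and is eligible for her category, and capacities `qr` are respected. -/
def IsVRMatching (qr : R → ℕ) (elig : R → Finset ι) (S : Finset ι) (μ : ι → Option R) : Prop :=
  (∀ i c, μ i = some c → i ∈ S ∧ i ∈ elig c) ∧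
  ∀ c, (Finset.univ.filter fun i => μ i = some c).card ≤ qr c

/-- Number of individuals matched by `μ`. -/
def matchedCount (μ : ι → Option R) : ℕ :=
  (Finset.univ.filter fun i => (μ i).isSome).card

/-- The VR-maximality function `β`: the maximum number of VR-protected positions that can be
simultaneously filled by eligible members of `S`. -/
def VRmax (qr : R → ℕ) (elig : R → Finset ι) (S : Finset ι) : ℕ :=
  Finset.univ.sup fun μ : ι → Option R =>
    if IsVRMatching qr elig S μ then matchedCount μ else 0

/-- Step 2 of the meritorious Over-and-Above rule (with fuel): repeatedly add the
highest-merit remaining individual of `J` who increases the VR-utilization. -/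
def mGreedy (σ : ι → ℝ) (qr : R → ℕ) (elig : R → Finset ι) (J : Finset ι) :
    ℕ → Finset ι → Finset ι
  | 0, S => S
  | n + 1, S =>
    let cand := (J \ S).filter fun i => VRmax qr elig (insert i S) = VRmax qr elig S + 1
    if h : cand.Nonempty then
      mGreedy σ qr elig J n (insert (Finset.exists_max_image cand σ h).choose S)
    else S

/-- The individuals chosen in Step 2 of the meritorious Over-and-Above rule on `I`,
where `qo` is the open-category capacity. -/
def mStep2 (σ : ι → ℝ) (qo : ℕ) (qr : R → ℕ) (elig : R → Finset ι) (I : Finset ι) : Finset ι :=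
  mGreedy σ qr elig (I \ topK σ I qo) (Fintype.card ι) ∅

/-- The aggregate of the meritorious Over-and-Above rule: the top-merit open recipients
together with the Step-2 greedy VR recipients. -/
def mOAagg (σ : ι → ℝ) (qo : ℕ) (qr : R → ℕ) (elig : R → Finset ι) (I : Finset ι) : Finset ι :=
  topK σ I qo ∪ mStep2 σ qo qr elig I

/-- The `ℓ`-th highest merit score among members of `S`, defaulting to `0`. -/
def nthScore (σ : ι → ℝ) (S : Finset ι) (ℓ : ℕ) : ℝ :=
  (((S.image σ).sort (· ≤ ·)).reverse).getD ℓ 0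

/-- `I` Gale dominates `J` with respect to merit scores `σ`. -/
def GaleDom (σ : ι → ℝ) (I J : Finset ι) : Prop :=
  J.card ≤ I.card ∧ ∀ ℓ < J.card, nthScore σ J ℓ ≤ nthScore σ I ℓ


/-!
The sets of applicants that can simultaneously hold VR positions are the independent sets of a
transversal matroid. By the deficiency form of Hall's theorem its rank `VRmax` equals the cut
expression `min_J (∑_{c ∈ J} q_c + #{i ∈ S | i is eligible for some c ∉ J})`, which is visibly
submodular. Step 2 of the meritorious rule is the matroid greedy algorithm, so every applicant it
skips is spanned by the higher-merit applicants it picked; hence above every merit threshold it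
picks at least as many applicants as any independent set does, in particular as many as the VR
recipients of `C`. Compliance with VR protections keeps those recipients out of the top `q^o`
applicants, so counting above each threshold gives Gale dominance.
-/

open Finset Function

structure IsMatroidRank {α : Type*} [DecidableEq α] (r : Finset α → ℕ) : Prop where
  empty : r ∅ = 0
  mono : Monotone r
  insert_le : ∀ x S, r (insert x S) ≤ r S + 1
  submodular : ∀ X Y, r (X ∪ Y) + r (X ∩ Y) ≤ r X + r Y

namespace IsMatroidRank

variable {α : Type*} [DecidableEq α] {r : Finset α → ℕ}

theorem le_add_card_of_union (hr : IsMatroidRank r) (A B : Finset α) :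
    r (A ∪ B) ≤ r A + #B := by
  induction B using Finset.induction_on with
  | empty => simp
  | insert b B hb ih =>
    rw [union_insert, card_insert_of_notMem hb]
    exact (hr.insert_le b _).trans (by omega)

theorem le_card (hr : IsMatroidRank r) (S : Finset α) : r S ≤ #S := by
  simpa [hr.empty] using hr.le_add_card_of_union ∅ S

theorem card_le_of_subset (hr : IsMatroidRank r) {A B : Finset α} (hAB : A ⊆ B)
    (hB : #B ≤ r B) : #A ≤ r A := by
  have hunion := hr.le_add_card_of_union A (B \ A)
  rw [union_sdiff_of_subset hAB] at hunion
  have := card_sdiff_add_card_eq_card hAB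
  omega

theorem insert_eq_of_ne_succ (hr : IsMatroidRank r) {x : α} {S : Finset α}
    (h : r (insert x S) ≠ r S + 1) : r (insert x S) = r S :=
  le_antisymm (by have := hr.insert_le x S; omega) (hr.mono (subset_insert x S))

theorem insert_eq_of_subset (hr : IsMatroidRank r) {x : α} {A B : Finset α}
    (h : r (insert x A) = r A) (hAB : A ⊆ B) : r (insert x B) = r B := by
  have hsub := hr.submodular (insert x A) B
  rw [insert_union, union_eq_right.2 hAB, h] at hsub
  have hA : r A ≤ r (insert x A ∩ B) :=
    hr.mono (subset_inter (subset_insert x A) hAB)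
  exact le_antisymm (by omega) (hr.mono (subset_insert x B))

theorem union_eq_of_forall_insert_eq (hr : IsMatroidRank r) {A B : Finset α}
    (h : ∀ x ∈ B, r (insert x A) = r A) : r (A ∪ B) = r A := by
  induction B using Finset.induction_on with
  | empty => rw [union_empty]
  | insert b B _ ih =>
    rw [union_insert, hr.insert_eq_of_subset (h b (mem_insert_self b B)) subset_union_left,
      ih fun x hx => h x (mem_insert_of_mem hx)]

/-- The optimality of the greedy algorithm, in the form of threshold counts. -/
theorem card_filter_le_of_spanned (hr : IsMatroidRank r) (σ : α → ℝ) {G X : Finset α}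
    (hX : #X ≤ r X)
    (hG : ∀ x ∈ X, x ∉ G →
      r (insert x (G.filter (σ x < σ ·))) = r (G.filter (σ x < σ ·)))
    (t : ℝ) : #(X.filter (t ≤ σ ·)) ≤ #(G.filter (t ≤ σ ·)) := by
  set A := G.filter (t ≤ σ ·)
  set B := X.filter (t ≤ σ ·)
  have hspan : ∀ x ∈ B, r (insert x A) = r A := by
    intro x hx
    obtain ⟨hxX, hxt⟩ := mem_filter.1 hx
    by_cases hxG : x ∈ G
    · rw [insert_eq_of_mem (mem_filter.2 ⟨hxG, hxt⟩)]
    · refine hr.insert_eq_of_subset (hG x hxX hxG) fun g hg => ?_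
      obtain ⟨hgG, hxg⟩ := mem_filter.1 hg
      exact mem_filter.2 ⟨hgG, hxt.trans hxg.le⟩
  calc #B ≤ r B := hr.card_le_of_subset (filter_subset _ X) hX
    _ ≤ r (A ∪ B) := hr.mono subset_union_right
    _ = r A := hr.union_eq_of_forall_insert_eq hspan
    _ ≤ #A := hr.le_card A

end IsMatroidRank

theorem card_filter_union_add_card_filter_inter_le {α : Type*} [DecidableEq α]
    {p q p' q' : α → Prop} [DecidablePred p] [DecidablePred q] [DecidablePred p']
    [DecidablePred q'] (X Y : Finset α) (hp' : ∀ i, p' i → p i ∧ q i)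
    (hq' : ∀ i, q' i → p i ∨ q i) :
    #((X ∪ Y).filter p') + #((X ∩ Y).filter q') ≤ #(X.filter p) + #(Y.filter q) := by
  rw [← card_union_add_card_inter, ← card_union_add_card_inter (X.filter p)]
  refine add_le_add (card_le_card fun i hi => ?_) (card_le_card fun i hi => ?_) <;>
  · have := hp' i
    have := hq' i
    simp only [mem_union, mem_inter, mem_filter] at hi ⊢
    tauto

section CutRank

omit [Fintype ι]

variable {qr : R → ℕ} {elig : R → Finset ι}

/-- Every matching of `S` fills at most `qr c` positions of each category `c ∈ J`, plus one
position for each member of `S` eligible for some category outside `J`. -/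
def cutBound (qr : R → ℕ) (elig : R → Finset ι) (J : Finset R) (S : Finset ι) : ℕ :=
  ∑ c ∈ J, qr c + #(S.filter fun i => ∃ c ∉ J, i ∈ elig c)

def cutRank (qr : R → ℕ) (elig : R → Finset ι) (S : Finset ι) : ℕ :=
  univ.inf' univ_nonempty fun J => cutBound qr elig J S

theorem cutRank_le_cutBound (J : Finset R) (S : Finset ι) :
    cutRank qr elig S ≤ cutBound qr elig J S :=
  inf'_le _ (mem_univ J)

theorem exists_cutBound_eq_cutRank (S : Finset ι) :
    ∃ J, cutBound qr elig J S = cutRank qr elig S := by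
  obtain ⟨J, -, hJ⟩ := exists_mem_eq_inf' univ_nonempty fun J => cutBound qr elig J S
  exact ⟨J, hJ.symm⟩

theorem cutRank_submodular (X Y : Finset ι) :
    cutRank qr elig (X ∪ Y) + cutRank qr elig (X ∩ Y) ≤
      cutRank qr elig X + cutRank qr elig Y := by
  obtain ⟨J, hJ⟩ := exists_cutBound_eq_cutRank (qr := qr) (elig := elig) X
  obtain ⟨J', hJ'⟩ := exists_cutBound_eq_cutRank (qr := qr) (elig := elig) Y
  have hcount := card_filter_union_add_card_filter_inter_le X Y
    (p := fun i => ∃ c ∉ J, i ∈ elig c) (q := fun i => ∃ c ∉ J', i ∈ elig c)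
    (p' := fun i => ∃ c ∉ J ∪ J', i ∈ elig c) (q' := fun i => ∃ c ∉ J ∩ J', i ∈ elig c)
    (fun i ⟨c, hc, hic⟩ => by
      rw [mem_union, not_or] at hc
      exact ⟨⟨c, hc.1, hic⟩, ⟨c, hc.2, hic⟩⟩)
    (fun i ⟨c, hc, hic⟩ => by
      by_cases hcJ : c ∈ J
      · exact Or.inr ⟨c, fun hcJ' => hc (mem_inter.2 ⟨hcJ, hcJ'⟩), hic⟩
      · exact Or.inl ⟨c, hcJ, hic⟩)
  calc cutRank qr elig (X ∪ Y) + cutRank qr elig (X ∩ Y)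
      ≤ cutBound qr elig (J ∪ J') (X ∪ Y) + cutBound qr elig (J ∩ J') (X ∩ Y) :=
        add_le_add (cutRank_le_cutBound _ _) (cutRank_le_cutBound _ _)
    _ ≤ cutBound qr elig J X + cutBound qr elig J' Y := by
        have := sum_union_inter (s₁ := J) (s₂ := J') (f := qr)
        unfold cutBound
        omega
    _ = cutRank qr elig X + cutRank qr elig Y := by rw [hJ, hJ']

theorem isMatroidRank_cutRank : IsMatroidRank (cutRank qr elig) where
  empty := Nat.eq_zero_of_le_zero ((cutRank_le_cutBound ∅ ∅).trans (by simp [cutBound]))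
  mono S T hST := by
    obtain ⟨J, hJ⟩ := exists_cutBound_eq_cutRank (qr := qr) (elig := elig) T
    refine (cutRank_le_cutBound J S).trans (hJ ▸ ?_)
    exact Nat.add_le_add_left (card_le_card (filter_subset_filter _ hST)) _
  insert_le x S := by
    obtain ⟨J, hJ⟩ := exists_cutBound_eq_cutRank (qr := qr) (elig := elig) S
    refine (cutRank_le_cutBound J _).trans (hJ ▸ ?_)
    unfold cutBound
    rw [filter_insert]
    split_ifs
    · have := card_insert_le x (S.filter fun i => ∃ c ∉ J, i ∈ elig c)
      omega
    · omega
  submodular := cutRank_submodular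

end CutRank

section TransversalRank

variable {qr : R → ℕ} {elig : R → Finset ι}

theorem matchedCount_le_cutBound {S : Finset ι} {μ : ι → Option R}
    (hμ : IsVRMatching qr elig S μ) (J : Finset R) :
    matchedCount μ ≤ cutBound qr elig J S := by
  have hsub : univ.filter (fun i => (μ i).isSome) ⊆
      J.biUnion (fun c => univ.filter (μ · = some c)) ∪
        S.filter (fun i => ∃ c ∉ J, i ∈ elig c) := by
    intro i hi
    obtain ⟨c, hc⟩ := Option.isSome_iff_exists.1 (mem_filter.1 hi).2
    by_cases hcJ : c ∈ J
    · exact mem_union_left _ (mem_biUnion.2 ⟨c, hcJ, mem_filter.2 ⟨mem_univ i, hc⟩⟩)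
    · exact mem_union_right _ (mem_filter.2 ⟨(hμ.1 i c hc).1, c, hcJ, (hμ.1 i c hc).2⟩)
  calc matchedCount μ
      ≤ #(J.biUnion fun c => univ.filter (μ · = some c)) +
          #(S.filter fun i => ∃ c ∉ J, i ∈ elig c) :=
        (card_le_card hsub).trans (card_union_le _ _)
    _ ≤ cutBound qr elig J S :=
        Nat.add_le_add_right (card_biUnion_le.trans (sum_le_sum fun c _ => hμ.2 c)) _

theorem VRmax_le_cutRank (S : Finset ι) : VRmax qr elig S ≤ cutRank qr elig S := by
  refine Finset.sup_le fun μ _ => ?_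
  split_ifs with hμ
  · exact le_inf' _ _ fun J _ => matchedCount_le_cutBound hμ J
  · exact Nat.zero_le _

theorem matchedCount_le_VRmax {S : Finset ι} {μ : ι → Option R}
    (hμ : IsVRMatching qr elig S μ) : matchedCount μ ≤ VRmax qr elig S := by
  have := le_sup (f := fun μ => if IsVRMatching qr elig S μ then matchedCount μ else 0)
    (mem_univ μ)
  rwa [if_pos hμ] at this

/-- Member `i` of `S` may take any of the `qr c` seats of a category `c` she is eligible for, or
any of `d` dummy seats, which stand for applicants left unmatched. -/
def seatsOf (qr : R → ℕ) (elig : R → Finset ι) (S : Finset ι) (d : ℕ) (i : ι) :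
    Finset ((Σ c : R, Fin (qr c)) ⊕ Fin d) :=
  ((univ.filter fun c => i ∈ S ∧ i ∈ elig c).sigma fun _ => univ).disjSum univ

theorem card_le_card_biUnion_seatsOf (S s : Finset ι) :
    #s ≤ #(s.biUnion (seatsOf qr elig S (Fintype.card ι - cutRank qr elig S))) := by
  rcases s.eq_empty_or_nonempty with rfl | ⟨i₀, hi₀⟩
  · simp
  set Js := univ.filter fun c => ∃ i ∈ s, i ∈ S ∧ i ∈ elig c
  have hseats : (Js.sigma fun _ => univ).disjSum univ ⊆
      s.biUnion (seatsOf qr elig S (Fintype.card ι - cutRank qr elig S)) := by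
    rintro (⟨c, k⟩ | k) h
    · obtain ⟨i, hi, hiS, hic⟩ := (mem_filter.1 (mem_sigma.1 (inl_mem_disjSum.1 h)).1).2
      exact mem_biUnion.2 ⟨i, hi, by simp [seatsOf, hiS, hic]⟩
    · exact mem_biUnion.2 ⟨i₀, hi₀, by simp [seatsOf]⟩
  have hs : s ⊆ (S.filter fun i => ∃ c ∉ Js, i ∈ elig c)ᶜ := by
    intro i hi
    simp only [mem_compl, mem_filter, not_and, not_exists]
    exact fun hiS c hc hic => hc (mem_filter.2 ⟨mem_univ c, i, hi, hiS, hic⟩)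
  have hcut := cutRank_le_cutBound (qr := qr) (elig := elig) Js S
  have hrank := (isMatroidRank_cutRank (qr := qr) (elig := elig)).le_card S
  have hS := card_le_univ S
  unfold cutBound at hcut
  calc #s ≤ Fintype.card ι - #(S.filter fun i => ∃ c ∉ Js, i ∈ elig c) :=
        (card_le_card hs).trans (card_compl _).le
    _ ≤ ∑ c ∈ Js, qr c + (Fintype.card ι - cutRank qr elig S) := by omega
    _ = #((Js.sigma fun _ => univ).disjSum (univ : Finset (Fin _))) := by
        simp [card_disjSum, card_sigma]
    _ ≤ _ := card_le_card hseats

theorem le_VRmax_of_injective_seatsOf {S : Finset ι} {d : ℕ}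
    {f : ι → (Σ c : R, Fin (qr c)) ⊕ Fin d} (hf : Injective f)
    (hfS : ∀ i, f i ∈ seatsOf qr elig S d i) : Fintype.card ι - d ≤ VRmax qr elig S := by
  set μ : ι → Option R := fun i => (f i).elim (fun p => some p.1) fun _ => none
  have hμ : ∀ i c, μ i = some c → ∃ k, f i = .inl ⟨c, k⟩ := by
    intro i c hc
    rcases hfi : f i with ⟨c', k⟩ | k <;> simp only [μ, hfi, Sum.elim_inl, Sum.elim_inr,
      Option.some.injEq, reduceCtorEq] at hc
    subst hc
    exact ⟨k, rfl⟩
  have hmatch : IsVRMatching qr elig S μ := by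
    refine ⟨fun i c hc => ?_, fun c => ?_⟩
    · obtain ⟨k, hk⟩ := hμ i c hc
      simpa [seatsOf, hk] using hfS i
    · calc #(univ.filter (μ · = some c))
          ≤ #((({c} : Finset R).sigma fun c => (univ : Finset (Fin (qr c)))).disjSum
              (∅ : Finset (Fin d))) :=
            card_le_card_of_injOn f (fun i hi => by
              obtain ⟨k, hk⟩ := hμ i c (mem_filter.1 hi).2
              simp [hk]) hf.injOn
        _ = qr c := by simp
  have hunmatched : #(univ.filter fun i => ¬(μ i).isSome) ≤ d :=
    calc #(univ.filter fun i => ¬(μ i).isSome)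
        ≤ #((∅ : Finset (Σ c, Fin (qr c))).disjSum (univ : Finset (Fin d))) :=
          card_le_card_of_injOn f (fun i hi => by
            rcases hfi : f i with p | k
            · simp [μ, hfi] at hi
            · simp) hf.injOn
      _ = d := by simp
  have hpart := card_filter_add_card_filter_not (s := (univ : Finset ι)) fun i => (μ i).isSome
  rw [card_univ] at hpart
  calc Fintype.card ι - d ≤ matchedCount μ := by unfold matchedCount; omega
    _ ≤ VRmax qr elig S := matchedCount_le_VRmax hmatch

theorem cutRank_le_VRmax (S : Finset ι) : cutRank qr elig S ≤ VRmax qr elig S := by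
  obtain ⟨f, hf, hfS⟩ := (all_card_le_biUnion_card_iff_exists_injective _).1
    (card_le_card_biUnion_seatsOf (qr := qr) (elig := elig) S)
  have hS := ((isMatroidRank_cutRank (qr := qr) (elig := elig)).le_card S).trans (card_le_univ S)
  have := le_VRmax_of_injective_seatsOf hf hfS
  omega

theorem VRmax_eq_cutRank : VRmax qr elig = cutRank qr elig :=
  funext fun S => le_antisymm (VRmax_le_cutRank S) (cutRank_le_VRmax S)

theorem isMatroidRank_VRmax : IsMatroidRank (VRmax qr elig) := by
  rw [VRmax_eq_cutRank]
  exact isMatroidRank_cutRank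

end TransversalRank

section Greedy

variable {σ : ι → ℝ} {qr : R → ℕ} {elig : R → Finset ι} {J : Finset ι}

def GreedyInv (σ : ι → ℝ) (qr : R → ℕ) (elig : R → Finset ι) (J S : Finset ι) : Prop :=
  ∀ x ∈ J \ S, VRmax qr elig (insert x (S.filter (σ x < σ ·))) =
    VRmax qr elig (S.filter (σ x < σ ·)) ∨ ∀ g ∈ S, σ x < σ g

theorem mGreedy_subset {n : ℕ} {S : Finset ι} (hS : S ⊆ J) :
    mGreedy σ qr elig J n S ⊆ J := by
  induction n generalizing S with
  | zero => exact hS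
  | succ n ih =>
    rw [mGreedy]
    split_ifs with hc
    · obtain ⟨hi, -⟩ := (exists_max_image _ σ hc).choose_spec
      exact ih (insert_subset (mem_sdiff.1 (mem_filter.1 hi).1).1 hS)
    · exact hS

theorem greedyInv_insert (hσ : Injective σ) {S : Finset ι} {i : ι}
    (hS : GreedyInv σ qr elig J S)
    (hi : ∀ x ∈ J \ S, VRmax qr elig (insert x S) = VRmax qr elig S + 1 → σ x ≤ σ i) :
    GreedyInv σ qr elig J (insert i S) := by
  intro x hx
  obtain ⟨hxJ, hxiS⟩ := mem_sdiff.1 hx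
  rw [mem_insert, not_or] at hxiS
  obtain ⟨hxi, hxS⟩ := hxiS
  rcases hS x (mem_sdiff.2 ⟨hxJ, hxS⟩) with hspan | habove
  · exact Or.inl (isMatroidRank_VRmax.insert_eq_of_subset hspan
      (filter_subset_filter _ (subset_insert i S)))
  · rcases (hσ.ne hxi).lt_or_gt with hlt | hgt
    · exact Or.inr fun g hg => (mem_insert.1 hg).elim (· ▸ hlt) (habove g)
    · left
      have hfilter : (insert i S).filter (σ x < σ ·) = S := by
        rw [filter_insert, if_neg (not_lt.2 hgt.le), filter_true_of_mem habove]
      rw [hfilter]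
      exact isMatroidRank_VRmax.insert_eq_of_ne_succ fun hcand =>
        (hgt.trans_le (hi x (mem_sdiff.2 ⟨hxJ, hxS⟩) hcand)).false

theorem mGreedy_spec (hσ : Injective σ) {n : ℕ} {S : Finset ι}
    (hS : GreedyInv σ qr elig J S) (hn : #(J \ S) ≤ n) :
    GreedyInv σ qr elig J (mGreedy σ qr elig J n S) ∧
      ∀ x ∈ J \ mGreedy σ qr elig J n S,
        VRmax qr elig (insert x (mGreedy σ qr elig J n S)) ≠
          VRmax qr elig (mGreedy σ qr elig J n S) + 1 := by
  induction n generalizing S with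
  | zero =>
    rw [Nat.le_zero, card_eq_zero] at hn
    exact ⟨hS, fun x hx => by simp [mGreedy, hn] at hx⟩
  | succ n ih =>
    rw [mGreedy]
    split_ifs with hc
    · obtain ⟨hi, himax⟩ := (exists_max_image _ σ hc).choose_spec
      refine ih (greedyInv_insert hσ hS fun x hx hcand => himax x (mem_filter.2 ⟨hx, hcand⟩)) ?_
      have hiJS := (mem_filter.1 hi).1
      rw [sdiff_insert, card_erase_of_mem hiJS]
      omega
    · exact ⟨hS, fun x hx hcand => hc ⟨x, mem_filter.2 ⟨hx, hcand⟩⟩⟩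

theorem VRmax_insert_filter_mGreedy (hσ : Injective σ) {x : ι} (hxJ : x ∈ J)
    (hx : x ∉ mGreedy σ qr elig J (Fintype.card ι) ∅) :
    VRmax qr elig (insert x ((mGreedy σ qr elig J (Fintype.card ι) ∅).filter (σ x < σ ·))) =
      VRmax qr elig ((mGreedy σ qr elig J (Fintype.card ι) ∅).filter (σ x < σ ·)) := by
  have hstart : GreedyInv σ qr elig J ∅ := fun _ _ => Or.inr fun _ h => absurd h (notMem_empty _)
  obtain ⟨hinv, hterm⟩ := mGreedy_spec hσ hstart (n := Fintype.card ι) (card_le_univ _)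
  rcases hinv x (mem_sdiff.2 ⟨hxJ, hx⟩) with hspan | habove
  · exact hspan
  · rw [filter_true_of_mem habove]
    exact isMatroidRank_VRmax.insert_eq_of_ne_succ (hterm x (mem_sdiff.2 ⟨hxJ, hx⟩))

theorem card_filter_le_card_filter_mGreedy (hσ : Injective σ) {X : Finset ι} (hXJ : X ⊆ J)
    (hX : #X ≤ VRmax qr elig X) (t : ℝ) :
    #(X.filter (t ≤ σ ·)) ≤ #((mGreedy σ qr elig J (Fintype.card ι) ∅).filter (t ≤ σ ·)) :=
  isMatroidRank_VRmax.card_filter_le_of_spanned σ hX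
    (fun _ hx hxG => VRmax_insert_filter_mGreedy hσ (hXJ hx) hxG) t

end Greedy

section TopK

omit [Fintype ι]

variable {σ : ι → ℝ} {I : Finset ι} {k : ℕ}

omit [DecidableEq ι] in
theorem filter_le_subset_topK {t : ℝ} (h : #(I.filter (t ≤ σ ·)) ≤ k) :
    I.filter (t ≤ σ ·) ⊆ topK σ I k := by
  intro i hi
  obtain ⟨hiI, hit⟩ := mem_filter.1 hi
  refine mem_filter.2 ⟨hiI, le_trans (card_le_card fun j hj => ?_) h⟩
  obtain ⟨hjI, hij⟩ := mem_filter.1 hj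
  exact mem_filter.2 ⟨hjI, hit.trans hij⟩

omit [DecidableEq ι] in
theorem le_of_mem_topK {t : ℝ} {i : ι} (h : k < #(I.filter (t ≤ σ ·)))
    (hi : i ∈ topK σ I k) : t ≤ σ i := by
  by_contra! hit
  have hsub : I.filter (t ≤ σ ·) ⊆ I.filter (σ i ≤ σ ·) :=
    monotone_filter_right I fun _ _ htj => hit.le.trans htj
  exact (h.trans_le ((card_le_card hsub).trans (mem_filter.1 hi).2)).false

theorem notMem_topK {i : ι} (hi : i ∈ I) (h : k ≤ #(I.filter (σ i < σ ·))) :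
    i ∉ topK σ I k := by
  intro hiT
  have hsub : insert i (I.filter (σ i < σ ·)) ⊆ I.filter (σ i ≤ σ ·) :=
    insert_subset (mem_filter.2 ⟨hi, le_rfl⟩) (monotone_filter_right I fun _ _ => le_of_lt)
  have := card_le_card hsub
  rw [card_insert_of_notMem fun h => (mem_filter.1 h).2.false] at this
  have := (mem_filter.1 hiT).2
  omega

theorem le_card_topK (hσ : Injective σ) (h : k ≤ #I) : k ≤ #(topK σ I k) := by
  by_contra! hlt
  obtain ⟨x, hx, hmax⟩ := exists_max_image (I \ topK σ I k) σ
    (sdiff_nonempty.2 fun hsub => ((card_le_card hsub).trans_lt hlt).not_ge h)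
  obtain ⟨hxI, hxT⟩ := mem_sdiff.1 hx
  refine hxT (mem_filter.2 ⟨hxI, ?_⟩)
  have hsub : I.filter (σ x ≤ σ ·) ⊆ insert x (topK σ I k) := by
    intro j hj
    obtain ⟨hjI, hxj⟩ := mem_filter.1 hj
    by_cases hjT : j ∈ topK σ I k
    · exact mem_insert_of_mem hjT
    · exact mem_insert.2 (Or.inl (hσ (le_antisymm (hmax j (mem_sdiff.2 ⟨hjI, hjT⟩)) hxj)))
  have := (card_le_card hsub).trans (card_insert_le _ _)
  omega

end TopK

section ChoiceRule

variable {σ : ι → ℝ} {q : Option R → ℕ} {elig : R → Finset ι}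
  {C : Finset ι → Option R → Finset ι}

def aggVR (C : Finset ι → Option R → Finset ι) (I : Finset ι) : Finset ι :=
  univ.biUnion fun c : R => C I (some c)

omit [Fintype ι] [DecidableEq R] in
theorem aggC_eq_union (I : Finset ι) : aggC C I = C I none ∪ aggVR C I := by
  ext i
  simp [aggC, aggVR, Option.exists]

omit [Fintype ι] [DecidableEq R] in
theorem card_filter_aggC_le (C : Finset ι → Option R → Finset ι) (I : Finset ι) (p : ι → Prop)
    [DecidablePred p] :
    #((aggC C I).filter p) ≤ #((C I none).filter p) + #((aggVR C I).filter p) := by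
  rw [aggC_eq_union, filter_union]
  exact card_union_le _ _

omit [DecidableEq R] in
theorem aggC_subset (hC : IsChoiceRule q elig C) (I : Finset ι) : aggC C I ⊆ I := by
  intro i hi
  obtain ⟨v, -, hv⟩ := mem_biUnion.1 hi
  exact (mem_inter.1 ((hC I).1 v hv)).1

omit [DecidableEq R] in
theorem aggVR_subset_sdiff_topK (hC : IsChoiceRule q elig C) (hcvr : CompliesVR σ q C)
    (I : Finset ι) : aggVR C I ⊆ I \ topK σ I (q none) := by
  intro i hi
  obtain ⟨c, -, hic⟩ := mem_biUnion.1 hi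
  have hiI := (mem_inter.1 ((hC I).1 _ hic)).1
  obtain ⟨hfull, habove⟩ := hcvr I c i hic
  refine mem_sdiff.2 ⟨hiI, notMem_topK hiI (hfull ▸ card_le_card fun j hj => ?_)⟩
  exact mem_filter.2 ⟨(mem_inter.1 ((hC I).1 none hj)).1, habove j hj⟩

theorem card_aggVR_le_VRmax (hC : IsChoiceRule q elig C) (I : Finset ι) :
    #(aggVR C I) ≤ VRmax (fun c => q (some c)) elig (aggVR C I) := by
  have hex : ∀ i ∈ aggVR C I, ∃ c, i ∈ C I (some c) := fun i hi => by
    obtain ⟨c, -, hic⟩ := mem_biUnion.1 hi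
    exact ⟨c, hic⟩
  set μ : ι → Option R := fun i => if h : i ∈ aggVR C I then some (hex i h).choose else none
  have hμ : ∀ i c, μ i = some c → i ∈ aggVR C I ∧ i ∈ C I (some c) := by
    intro i c hc
    by_cases h : i ∈ aggVR C I
    · simp only [μ, dif_pos h, Option.some.injEq] at hc
      exact ⟨h, hc ▸ (hex i h).choose_spec⟩
    · simp [μ, dif_neg h] at hc
  have hmatch : IsVRMatching (fun c => q (some c)) elig (aggVR C I) μ := by
    refine ⟨fun i c hc => ⟨(hμ i c hc).1, (mem_inter.1 ((hC I).1 _ (hμ i c hc).2)).2⟩,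
      fun c => ?_⟩
    exact (card_le_card fun i hi => (hμ i c (mem_filter.1 hi).2).2).trans ((hC I).2.1 _)
  have hcount : matchedCount μ = #(aggVR C I) := by
    unfold matchedCount
    congr 1
    ext i
    by_cases h : i ∈ aggVR C I <;> simp [μ, h]
  exact hcount ▸ matchedCount_le_VRmax hmatch

end ChoiceRule

section GaleDominance

theorem le_iff_length_lt_countP {α : Type*} [LinearOrder α] {A B : List α} {x t : α}
    (h : (A ++ x :: B).Pairwise (· ≥ ·)) :
    t ≤ x ↔ A.length < (A ++ x :: B).countP (t ≤ ·) := by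
  simp only [List.pairwise_append, List.pairwise_cons, List.mem_cons] at h
  obtain ⟨-, ⟨hxB, -⟩, hAxB⟩ := h
  rw [List.countP_append, List.countP_cons]
  constructor
  · intro htx
    have hA : A.countP (t ≤ ·) = A.length :=
      List.countP_eq_length.2 fun a ha => by simpa using htx.trans (hAxB a ha x (Or.inl rfl))
    simp [htx, hA]
  · intro hlt
    by_contra! hxt
    have hB : B.countP (t ≤ ·) = 0 :=
      List.countP_eq_zero.2 fun b hb => by simpa using (hxB b hb).trans_lt hxt
    have hA := A.countP_le_length (p := (t ≤ ·))
    simp [not_le.2 hxt, hB] at hlt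
    omega

theorem le_getD_iff_lt_countP {α : Type*} [LinearOrder α] {l : List α}
    (hl : l.Pairwise (· ≥ ·)) {m : ℕ} (hm : m < l.length) (d t : α) :
    t ≤ l.getD m d ↔ m < l.countP (t ≤ ·) := by
  have hsplit : l = l.take m ++ l[m] :: l.drop (m + 1) := by
    rw [← List.drop_eq_getElem_cons hm, List.take_append_drop]
  rw [hsplit] at hl
  have := le_iff_length_lt_countP hl (t := t)
  rw [← hsplit, List.length_take_of_le hm.le] at this
  rw [List.getD_eq_getElem _ _ hm, this]

omit [Fintype ι] [DecidableEq ι]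

variable {σ : ι → ℝ}

theorem le_nthScore_iff (hσ : Injective σ) {S : Finset ι} {ℓ : ℕ} (hℓ : ℓ < #S) (t : ℝ) :
    t ≤ nthScore σ S ℓ ↔ ℓ < #(S.filter (t ≤ σ ·)) := by
  set l := ((S.image σ).sort (· ≤ ·)).reverse
  have hsorted : l.Pairwise (· ≥ ·) := List.pairwise_reverse.2 ((S.image σ).pairwise_sort _)
  have hlen : l.length = #S := by
    rw [List.length_reverse, length_sort, card_image_of_injective _ hσ]
  have hcount : l.countP (t ≤ ·) = #(S.filter (t ≤ σ ·)) := by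
    rw [List.countP_reverse, ← Multiset.coe_countP, sort_eq, Multiset.countP_eq_card_filter]
    change #((S.image σ).filter (t ≤ ·)) = _
    rw [filter_image, card_image_of_injOn hσ.injOn]
  rw [nthScore, le_getD_iff_lt_countP hsorted (hlen ▸ hℓ), hcount]

theorem galeDom_of_card_filter_le (hσ : Injective σ) {A B : Finset ι}
    (h : ∀ t, #(B.filter (t ≤ σ ·)) ≤ #(A.filter (t ≤ σ ·))) : GaleDom σ A B := by
  have key : ∀ ℓ < #B, ℓ < #A ∧ nthScore σ B ℓ ≤ nthScore σ A ℓ := by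
    intro ℓ hℓ
    have hB := (le_nthScore_iff hσ hℓ _).1 le_rfl
    have hA := hB.trans_le (h _)
    have hℓA := hA.trans_le (card_filter_le _ _)
    exact ⟨hℓA, (le_nthScore_iff hσ hℓA _).2 hA⟩
  refine ⟨?_, fun ℓ hℓ => (key ℓ hℓ).2⟩
  by_contra! hlt
  exact (key _ hlt).1.false

end GaleDominance

theorem card_filter_mOAagg (σ : ι → ℝ) (qo : ℕ) (qr : R → ℕ) (elig : R → Finset ι)
    (I : Finset ι) (p : ι → Prop) [DecidablePred p] :
    #((mOAagg σ qo qr elig I).filter p) =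
      #((topK σ I qo).filter p) + #((mStep2 σ qo qr elig I).filter p) := by
  have hG : mStep2 σ qo qr elig I ⊆ I \ topK σ I qo := mGreedy_subset (empty_subset _)
  rw [mOAagg, filter_union,
    card_union_of_disjoint (disjoint_filter_filter (disjoint_sdiff.mono_right hG))]

theorem mOA_galeDom_general (σ : ι → ℝ) (hσ : Function.Injective σ)
    (q : Option R → ℕ) (elig : R → Finset ι)
    (C : Finset ι → Option R → Finset ι) (hC : IsChoiceRule q elig C)
    (hcvr : CompliesVR σ q C) :
    ∀ I : Finset ι,
      GaleDom σ (mOAagg σ (q none) (fun c => q (some c)) elig I) (aggC C I) := by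
  intro I
  refine galeDom_of_card_filter_le hσ fun t => ?_
  set T := topK σ I (q none)
  have hVR : #((aggVR C I).filter (t ≤ σ ·)) ≤
      #((mStep2 σ (q none) (fun c => q (some c)) elig I).filter (t ≤ σ ·)) :=
    card_filter_le_card_filter_mGreedy hσ (aggVR_subset_sdiff_topK hC hcvr I)
      (card_aggVR_le_VRmax hC I) t
  have hagg := card_filter_aggC_le C I (t ≤ σ ·)
  rw [card_filter_mOAagg]
  by_cases hk : #(I.filter (t ≤ σ ·)) ≤ q none
  · have hsub : (aggC C I).filter (t ≤ σ ·) ⊆ T.filter (t ≤ σ ·) := fun i hi =>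
      mem_filter.2 ⟨filter_le_subset_topK hk (filter_subset_filter _ (aggC_subset hC I) hi),
        (mem_filter.1 hi).2⟩
    exact (card_le_card hsub).trans (Nat.le_add_right _ _)
  · push Not at hk
    have hT : T.filter (t ≤ σ ·) = T := filter_true_of_mem fun i hi => le_of_mem_topK hk hi
    have hqT : q none ≤ #T := le_card_topK hσ (hk.le.trans (card_filter_le _ _))
    have hopen : #((C I none).filter (t ≤ σ ·)) ≤ q none :=
      (card_filter_le _ _).trans ((hC I).2.1 none)
    rw [hT]
    omega

/-- the aggregate of the meritorious Over-and-Above rule Gale dominates the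
aggregate of any choice rule satisfying the three axioms. -/
theorem mOA_galeDom (σ : ι → ℝ) (hσ : Function.Injective σ)
    (q : Option R → ℕ) (elig : R → Finset ι)
    (C : Finset ι → Option R → Finset ι) (hC : IsChoiceRule q elig C)
    (hnw : NonWasteful q elig C) (hnje : NoJustifiedEnvy σ elig C)
    (hcvr : CompliesVR σ q C) :
    ∀ I : Finset ι,
      GaleDom σ (mOAagg σ (q none) (fun c => q (some c)) elig I) (aggC C I) :=
  mOA_galeDom_general σ hσ q elig C hC hcvr
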